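/- Let U ⊆ ℝ² be open and φ : U → ℝ³ a smooth immersion with induced metric g and second fundamental form h. Then the Gauss equation holds: det(g⁻¹h) = K at every point of U, where K is the Gauss curvature of the induced metric g computed intrinsically from g. -/

import Mathlib

noncomputable section
open Matrix Real

/-- Points of the parameter domain `U ⊆ ℝ²`. -/
abbrev Pt : Type := Fin 2 → ℝ
/-- Vectors in `ℝ³`. -/
abbrev Vec3 : Type := Fin 3 → ℝ

/-- Partial derivative `∂ᵢ` of a scalar function on `ℝ²`. -/
def pd (i : Fin 2) (f : Pt → ℝ) : Pt → ℝ :=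
  fun p => fderiv ℝ f p (Pi.single i 1)

/-- Partial derivative `∂ᵢ` of an `ℝ³`-valued function on `ℝ²`. -/
def pdV (i : Fin 2) (f : Pt → Vec3) : Pt → Vec3 :=
  fun p => fderiv ℝ f p (Pi.single i 1)

/-- The induced metric (first fundamental form) `gᵢⱼ = ∂ᵢφ ⬝ ∂ⱼφ` of a map `φ : ℝ² → ℝ³`. -/
def indMetric (φ : Pt → Vec3) : Pt → Matrix (Fin 2) (Fin 2) ℝ :=
  fun p => Matrix.of fun i j => pdV i φ p ⬝ᵥ pdV j φ p

/-- The unit normal `n = (∂₁φ × ∂₂φ)/‖∂₁φ × ∂₂φ‖`. -/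
def unitNormal (φ : Pt → Vec3) : Pt → Vec3 :=
  fun p => (Real.sqrt ((crossProduct (pdV 0 φ p) (pdV 1 φ p)) ⬝ᵥ
      (crossProduct (pdV 0 φ p) (pdV 1 φ p))))⁻¹ •
    crossProduct (pdV 0 φ p) (pdV 1 φ p)

/-- The second fundamental form `hᵢⱼ = n ⬝ ∂ᵢ∂ⱼφ`. -/
def sff (φ : Pt → Vec3) : Pt → Matrix (Fin 2) (Fin 2) ℝ :=
  fun p => Matrix.of fun i j => unitNormal φ p ⬝ᵥ pdV i (pdV j φ) p

/-- Christoffel symbols `Γ^k_{ij}` of a metric `g`. -/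
def christoffel (g : Pt → Matrix (Fin 2) (Fin 2) ℝ) (k i j : Fin 2) : Pt → ℝ :=
  fun p => (1/2) * ∑ l, (g p)⁻¹ k l *
    (pd i (fun q => g q j l) p + pd j (fun q => g q i l) p - pd l (fun q => g q i j) p)

/-- Covariant derivative `∇ᵢ h_{jk}` of a symmetric 2-tensor `h` with respect to `g`. -/
def covD (g h : Pt → Matrix (Fin 2) (Fin 2) ℝ) (i j k : Fin 2) : Pt → ℝ :=
  fun p => pd i (fun q => h q j k) p
    - ∑ l, christoffel g l i j p * h p l k
    - ∑ l, christoffel g l i k p * h p j l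

/-- Covariant Hessian `(∇²u)ᵢⱼ = ∂ᵢ∂ⱼu − Σₖ Γ^k_{ij} ∂ₖu`. -/
def hess (g : Pt → Matrix (Fin 2) (Fin 2) ℝ) (u : Pt → ℝ) (i j : Fin 2) : Pt → ℝ :=
  fun p => pd i (pd j u) p - ∑ k, christoffel g k i j p * pd k u p

/-- The curvature component `R₁₂₁₂` of a metric `g` (indices `1,2` rendered as `0,1`). -/
def R1212 (g : Pt → Matrix (Fin 2) (Fin 2) ℝ) : Pt → ℝ :=
  fun p => ∑ m, g p 0 m *
    (pd 0 (christoffel g m 1 1) p - pd 1 (christoffel g m 1 0) p +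
      ∑ l, (christoffel g m 0 l p * christoffel g l 1 1 p -
            christoffel g m 1 l p * christoffel g l 1 0 p))

/-- The Gauss curvature `K = R₁₂₁₂ / det g` of a metric `g`. -/
def gaussK (g : Pt → Matrix (Fin 2) (Fin 2) ℝ) : Pt → ℝ :=
  fun p => R1212 g p / (g p).det

/-- The squared norm `|du|²_g = Σᵢⱼ g^{ij} ∂ᵢu ∂ⱼu`. -/
def gradSq (g : Pt → Matrix (Fin 2) (Fin 2) ℝ) (u : Pt → ℝ) : Pt → ℝ :=
  fun p => ∑ i, ∑ j, (g p)⁻¹ i j * pd i u p * pd j u p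

/-- `g` is a smooth Riemannian metric on `U`: smooth entries, symmetric and
positive definite at each point of `U`. -/
def IsMetricOn (g : Pt → Matrix (Fin 2) (Fin 2) ℝ) (U : Set Pt) : Prop :=
  (∀ i j, ContDiffOn ℝ (⊤ : ℕ∞) (fun p => g p i j) U) ∧
  (∀ p ∈ U, (g p).IsSymm ∧ (g p).PosDef)

/-- `φ` is a smooth immersion on `U`. -/
def IsImmersionOn (φ : Pt → Vec3) (U : Set Pt) : Prop :=
  ContDiffOn ℝ (⊤ : ℕ∞) φ U ∧
  ∀ p ∈ U, LinearIndependent ℝ ![pdV 0 φ p, pdV 1 φ p]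

/-!
The Gauss formula `∂ᵢ∂ⱼφ = Σₖ Γᵏᵢⱼ ∂ₖφ + hᵢⱼ n` gives `∂ᵢ∂ⱼφ ⬝ ∂ₗφ = Σₖ Γᵏᵢⱼ gₖₗ` and
`∂ᵢ∂ⱼφ ⬝ ∂ₖ∂ₗφ = Σ Γᵃᵢⱼ Γᵇₖₗ gₐᵦ + hᵢⱼ hₖₗ`. Differentiating `∂₁∂₁φ ⬝ ∂₀φ` along `∂₀` and
`∂₀∂₁φ ⬝ ∂₀φ` along `∂₁`, the third derivatives of `φ` agree, and the difference of the two
identities is `R₁₂₁₂ = det h`. Finally `det (g⁻¹ h) = det h / det g = K`.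
-/

open scoped ContDiff Topology

section Calculus

variable {f f₁ f₂ : Pt → ℝ} {F G : Pt → Vec3} {p : Pt} {i j : Fin 2}

lemma pd_fun_mul (h₁ : DifferentiableAt ℝ f₁ p) (h₂ : DifferentiableAt ℝ f₂ p) :
    pd i (fun q => f₁ q * f₂ q) p = pd i f₁ p * f₂ p + f₁ p * pd i f₂ p := by
  simp only [pd, fderiv_fun_mul h₁ h₂, _root_.add_apply, _root_.smul_apply, smul_eq_mul]
  ring

lemma pd_fun_sum {ι : Type*} {s : Finset ι} {f : ι → Pt → ℝ}
    (h : ∀ k ∈ s, DifferentiableAt ℝ (f k) p) :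
    pd i (fun q => ∑ k ∈ s, f k q) p = ∑ k ∈ s, pd i (f k) p := by
  simp only [pd, fderiv_fun_sum h, FunLike.coe_sum, Finset.sum_apply]

lemma pdV_apply (hF : DifferentiableAt ℝ F p) (a : Fin 3) :
    pdV i F p a = pd i (fun q => F q a) p := by
  simp [pd, pdV, fderiv_apply hF a]

lemma pd_dotProduct (hF : DifferentiableAt ℝ F p) (hG : DifferentiableAt ℝ G p) :
    pd i (fun q => F q ⬝ᵥ G q) p = pdV i F p ⬝ᵥ G p + F p ⬝ᵥ pdV i G p := by
  simp only [dotProduct]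
  rw [pd_fun_sum fun a _ => (differentiableAt_pi.1 hF a).fun_mul (differentiableAt_pi.1 hG a),
    ← Finset.sum_add_distrib]
  refine Finset.sum_congr rfl fun a _ => ?_
  rw [pd_fun_mul (differentiableAt_pi.1 hF a) (differentiableAt_pi.1 hG a), pdV_apply hF,
    pdV_apply hG]

lemma ContDiffAt.pd (h : ContDiffAt ℝ ∞ f p) : ContDiffAt ℝ ∞ (pd i f) p :=
  (h.fderiv_right le_rfl).clm_apply contDiffAt_const

lemma ContDiffAt.pdV (h : ContDiffAt ℝ ∞ F p) : ContDiffAt ℝ ∞ (pdV i F) p :=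
  (h.fderiv_right le_rfl).clm_apply contDiffAt_const

lemma pdV_pdV_comm (h : ContDiffAt ℝ ∞ F p) : pdV i (pdV j F) p = pdV j (pdV i F) p := by
  have hd : DifferentiableAt ℝ (fderiv ℝ F) p :=
    (h.fderiv_right (m := ∞) le_rfl).differentiableAt (by simp)
  have hsnd : ∀ k l : Fin 2,
      pdV k (pdV l F) p = fderiv ℝ (fderiv ℝ F) p (Pi.single k 1) (Pi.single l 1) := by
    intro k l
    change fderiv ℝ (fun q => fderiv ℝ F q (Pi.single l 1)) p (Pi.single k 1) = _
    simp [fderiv_clm_apply hd (differentiableAt_const _)]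
  rw [hsnd, hsnd, h.isSymmSndFDerivAt (by
    rw [minSmoothness_of_isRCLikeNormedField]; exact WithTop.coe_le_coe.mpr le_top)]

end Calculus

lemma contDiffAt_inv_apply_fin_two {E : Type*} [NormedAddCommGroup E] [NormedSpace ℝ E]
    {n : WithTop ℕ∞} {G : E → Matrix (Fin 2) (Fin 2) ℝ} {x : E}
    (hG : ∀ i j, ContDiffAt ℝ n (fun y => G y i j) x) (hdet : (G x).det ≠ 0) (k l : Fin 2) :
    ContDiffAt ℝ n (fun y => (G y)⁻¹ k l) x := by
  have hdet' : ContDiffAt ℝ n (fun y => (G y).det) x := by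
    simp only [det_fin_two]
    exact ((hG 0 0).mul (hG 1 1)).sub ((hG 0 1).mul (hG 1 0))
  have hinv : (fun y => (G y)⁻¹ k l) = fun y => ((G y).det)⁻¹ * (G y).adjugate k l := by
    funext y
    rw [inv_def, Ring.inverse_eq_inv', Matrix.smul_apply, smul_eq_mul]
  rw [hinv]
  refine (hdet'.inv hdet).mul ?_
  simp only [adjugate_fin_two, of_apply]
  fin_cases k <;> fin_cases l
  · exact hG 1 1
  · exact (hG 0 1).neg
  · exact (hG 1 0).neg
  · exact hG 0 0

section Christoffel

variable {g : Pt → Matrix (Fin 2) (Fin 2) ℝ} {p : Pt}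

lemma christoffel_comm (hg : ∀ q, (g q).IsSymm) (k i j : Fin 2) :
    christoffel g k i j = christoffel g k j i := by
  have hji : (fun q => g q j i) = fun q => g q i j := funext fun q => (hg q).apply i j
  funext q
  simp only [christoffel, hji]
  congr 1
  refine Finset.sum_congr rfl fun l _ => ?_
  ring

lemma sum_christoffel_mul (hsymm : (g p).IsSymm) (hdet : IsUnit (g p).det) (i j l : Fin 2) :
    ∑ k, christoffel g k i j p * g p k l =
      (1/2) * (pd i (fun q => g q j l) p + pd j (fun q => g q i l) p
        - pd l (fun q => g q i j) p) := by
  set X : Fin 2 → ℝ := fun r => pd i (fun q => g q j r) p + pd j (fun q => g q i r) p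
    - pd r (fun q => g q i j) p
  have hvecMul : ∀ v, v ᵥ* g p = g p *ᵥ v := fun v => by
    simpa only [hsymm.eq] using vecMul_transpose (g p) v
  calc ∑ k, christoffel g k i j p * g p k l = (1/2) * (((g p)⁻¹ *ᵥ X) ᵥ* g p) l := by
        simp only [christoffel, vecMul, mulVec, dotProduct, Finset.mul_sum, Finset.sum_mul,
          mul_assoc, X]
    _ = (1/2) * X l := by
        rw [hvecMul, mulVec_mulVec, mul_nonsing_inv _ hdet, one_mulVec]

lemma contDiffAt_christoffel (hg : ∀ i j, ContDiffAt ℝ ∞ (fun q => g q i j) p)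
    (hdet : (g p).det ≠ 0) (k i j : Fin 2) : ContDiffAt ℝ ∞ (christoffel g k i j) p :=
  contDiffAt_const.mul <| ContDiffAt.sum fun l _ =>
    (contDiffAt_inv_apply_fin_two hg hdet k l).mul (((hg j l).pd.add (hg i l).pd).sub (hg i j).pd)

lemma pd_eq_sum_christoffel_mul (hg : ∀ q, (g q).IsSymm) (hdet : IsUnit (g p).det)
    (m k l : Fin 2) :
    pd m (fun q => g q k l) p =
      ∑ a, christoffel g a m k p * g p a l + ∑ a, christoffel g a m l p * g p a k := by
  have hlk : (fun q => g q l k) = fun q => g q k l := funext fun q => (hg q).apply k l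
  rw [sum_christoffel_mul (hg p) hdet, sum_christoffel_mul (hg p) hdet, hlk]
  ring

lemma pd_sum_christoffel_mul (hg : ∀ i j, ContDiffAt ℝ ∞ (fun q => g q i j) p)
    (hdet : (g p).det ≠ 0) (m i j l : Fin 2) :
    pd m (fun q => ∑ k, christoffel g k i j q * g q k l) p =
      ∑ k, (pd m (christoffel g k i j) p * g p k l
        + christoffel g k i j p * pd m (fun q => g q k l) p) := by
  have hΓ k := (contDiffAt_christoffel hg hdet k i j).differentiableAt (by simp)
  have hg' k := (hg k l).differentiableAt (by simp)
  rw [pd_fun_sum fun k _ => (hΓ k).fun_mul (hg' k)]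
  exact Finset.sum_congr rfl fun k _ => pd_fun_mul (hΓ k) (hg' k)

end Christoffel

lemma ContDiffAt.dotProduct {E ι : Type*} [NormedAddCommGroup E] [NormedSpace ℝ E] [Fintype ι]
    {n : WithTop ℕ∞} {F G : E → ι → ℝ} {x : E} (hF : ContDiffAt ℝ n F x)
    (hG : ContDiffAt ℝ n G x) : ContDiffAt ℝ n (fun y => F y ⬝ᵥ G y) x :=
  ContDiffAt.sum fun a _ => (contDiffAt_pi.1 hF a).mul (contDiffAt_pi.1 hG a)

section InducedMetric

variable {φ : Pt → Vec3} {p : Pt}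

lemma indMetric_isSymm (q : Pt) : (indMetric φ q).IsSymm :=
  IsSymm.ext fun i j => dotProduct_comm (pdV j φ q) (pdV i φ q)

lemma det_indMetric (q : Pt) :
    (indMetric φ q).det = (pdV 0 φ q ⨯₃ pdV 1 φ q) ⬝ᵥ (pdV 0 φ q ⨯₃ pdV 1 φ q) := by
  rw [cross_dot_cross, det_fin_two]
  rfl

lemma det_indMetric_pos (hli : LinearIndependent ℝ ![pdV 0 φ p, pdV 1 φ p]) :
    0 < (indMetric φ p).det := by
  have hc : pdV 0 φ p ⨯₃ pdV 1 φ p ≠ 0 := crossProduct_ne_zero_iff_linearIndependent.2 hli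
  rw [det_indMetric]
  exact lt_of_le_of_ne (Finset.sum_nonneg fun a _ => mul_self_nonneg _)
    (Ne.symm (dotProduct_self_eq_zero.not.2 hc))

variable (hφ : ContDiffAt ℝ ∞ φ p)
include hφ

lemma contDiffAt_indMetric (i j : Fin 2) : ContDiffAt ℝ ∞ (fun q => indMetric φ q i j) p :=
  hφ.pdV.dotProduct hφ.pdV

lemma pd_indMetric (i j l : Fin 2) :
    pd i (fun q => indMetric φ q j l) p =
      pdV i (pdV j φ) p ⬝ᵥ pdV l φ p + pdV j φ p ⬝ᵥ pdV i (pdV l φ) p :=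
  pd_dotProduct (hφ.pdV.differentiableAt (by simp)) (hφ.pdV.differentiableAt (by simp))

lemma sum_christoffel_mul_indMetric (hli : LinearIndependent ℝ ![pdV 0 φ p, pdV 1 φ p])
    (i j l : Fin 2) :
    ∑ k, christoffel (indMetric φ) k i j p * indMetric φ p k l =
      pdV i (pdV j φ) p ⬝ᵥ pdV l φ p := by
  rw [sum_christoffel_mul (indMetric_isSymm p) (isUnit_iff_ne_zero.2 (det_indMetric_pos hli).ne'),
    pd_indMetric hφ, pd_indMetric hφ, pd_indMetric hφ, pdV_pdV_comm hφ (i := j) (j := i),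
    pdV_pdV_comm hφ (i := l) (j := i), pdV_pdV_comm hφ (i := l) (j := j),
    dotProduct_comm (pdV j φ p), dotProduct_comm (pdV i φ p)]
  ring

end InducedMetric

section SecondFundamentalForm

variable {φ : Pt → Vec3} {p : Pt}

lemma unitNormal_dotProduct_pdV (q : Pt) (b : Fin 2) : unitNormal φ q ⬝ᵥ pdV b φ q = 0 := by
  rw [unitNormal, smul_dotProduct, smul_eq_zero, dotProduct_comm _ (pdV b φ q)]
  right
  fin_cases b
  · exact dot_self_cross _ _
  · exact dot_cross_self _ _

lemma unitNormal_dotProduct_self (hli : LinearIndependent ℝ ![pdV 0 φ p, pdV 1 φ p]) :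
    unitNormal φ p ⬝ᵥ unitNormal φ p = 1 := by
  have hpos := det_indMetric_pos hli
  rw [det_indMetric] at hpos
  simp only [unitNormal, smul_dotProduct, dotProduct_smul, smul_eq_mul]
  rw [← mul_assoc, ← mul_inv, Real.mul_self_sqrt hpos.le, inv_mul_cancel₀ hpos.ne']

variable (hφ : ContDiffAt ℝ ∞ φ p) (hli : LinearIndependent ℝ ![pdV 0 φ p, pdV 1 φ p])
include hφ hli

lemma pdV_pdV_eq_sum_christoffel_smul_add (i j : Fin 2) :
    pdV i (pdV j φ) p =
      ∑ k, christoffel (indMetric φ) k i j p • pdV k φ p + sff φ p i j • unitNormal φ p := by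
  set w : Vec3 :=
    ∑ k, christoffel (indMetric φ) k i j p • pdV k φ p + sff φ p i j • unitNormal φ p with hw
  have hdot : ∀ v : Vec3, v ⬝ᵥ w =
      ∑ k, christoffel (indMetric φ) k i j p * (v ⬝ᵥ pdV k φ p)
        + sff φ p i j * (v ⬝ᵥ unitNormal φ p) := fun v => by
    simp only [hw, dotProduct_add, dotProduct_sum, dotProduct_smul, smul_eq_mul]
  have hdet : Matrix.det ![pdV 0 φ p, pdV 1 φ p, unitNormal φ p] ≠ 0 := by
    have hpos := det_indMetric_pos hli
    rw [det_indMetric] at hpos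
    rw [← triple_product_eq_det, triple_product_permutation, triple_product_permutation,
      unitNormal, smul_dotProduct, smul_eq_mul]
    exact mul_ne_zero (inv_ne_zero (Real.sqrt_pos.2 hpos).ne') hpos.ne'
  have hrow_pdV : ∀ l : Fin 2, pdV l φ p ⬝ᵥ pdV i (pdV j φ) p = pdV l φ p ⬝ᵥ w := by
    intro l
    rw [hdot, dotProduct_comm, ← sum_christoffel_mul_indMetric hφ hli,
      dotProduct_comm _ (unitNormal φ p), unitNormal_dotProduct_pdV, mul_zero, add_zero]
    exact Finset.sum_congr rfl fun k _ => by rw [dotProduct_comm]; rfl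
  have hrow_unitNormal : unitNormal φ p ⬝ᵥ pdV i (pdV j φ) p = unitNormal φ p ⬝ᵥ w := by
    rw [hdot, unitNormal_dotProduct_self hli]
    simp only [unitNormal_dotProduct_pdV, mul_zero, Finset.sum_const_zero, zero_add, mul_one]
    rfl
  refine mulVec_injective_iff_isUnit.2 ((isUnit_iff_isUnit_det _).2 (isUnit_iff_ne_zero.2 hdet)) ?_
  funext r
  fin_cases r
  exacts [hrow_pdV 0, hrow_pdV 1, hrow_unitNormal]

lemma pdV_pdV_dotProduct_pdV_pdV (i j k l : Fin 2) :
    pdV i (pdV j φ) p ⬝ᵥ pdV k (pdV l φ) p =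
      ∑ a, christoffel (indMetric φ) a i j p *
          ∑ b, christoffel (indMetric φ) b k l p * indMetric φ p b a
        + sff φ p i j * sff φ p k l := by
  rw [pdV_pdV_eq_sum_christoffel_smul_add hφ hli i j]
  simp only [add_dotProduct, sum_dotProduct, smul_dotProduct, smul_eq_mul]
  congr 1
  exact Finset.sum_congr rfl fun a _ => by
    rw [dotProduct_comm, sum_christoffel_mul_indMetric hφ hli]

end SecondFundamentalForm

lemma pd_sum_christoffel_mul_indMetric {U : Set Pt} {φ : Pt → Vec3} {p : Pt} (hU : IsOpen U)
    (hφ : IsImmersionOn φ U) (hp : p ∈ U) (m i j l : Fin 2) :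
    pd m (fun q => ∑ k, christoffel (indMetric φ) k i j q * indMetric φ q k l) p =
      pdV m (pdV i (pdV j φ)) p ⬝ᵥ pdV l φ p + pdV i (pdV j φ) p ⬝ᵥ pdV m (pdV l φ) p := by
  have hsmooth : ∀ q ∈ U, ContDiffAt ℝ ∞ φ q := fun q hq => hφ.1.contDiffAt (hU.mem_nhds hq)
  have hlowered : (fun q => ∑ k, christoffel (indMetric φ) k i j q * indMetric φ q k l) =ᶠ[𝓝 p]
      fun q => pdV i (pdV j φ) q ⬝ᵥ pdV l φ q :=
    Filter.eventually_of_mem (hU.mem_nhds hp) fun q hq =>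
      sum_christoffel_mul_indMetric (hsmooth q hq) (hφ.2 q hq) i j l
  have hφp := hsmooth p hp
  rw [pd, hlowered.fderiv_eq]
  exact pd_dotProduct (hφp.pdV.pdV.differentiableAt (by simp)) (hφp.pdV.differentiableAt (by simp))

lemma R1212_indMetric_eq_det_sff {U : Set Pt} {φ : Pt → Vec3} {p : Pt} (hU : IsOpen U)
    (hφ : IsImmersionOn φ U) (hp : p ∈ U) : R1212 (indMetric φ) p = (sff φ p).det := by
  have hφp : ContDiffAt ℝ ∞ φ p := hφ.1.contDiffAt (hU.mem_nhds hp)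
  have hli := hφ.2 p hp
  have hdet := (det_indMetric_pos hli).ne'
  have h0 := pd_sum_christoffel_mul_indMetric hU hφ hp 0 1 1 0
  have h1 := pd_sum_christoffel_mul_indMetric hU hφ hp 1 0 1 0
  -- `∂₀∂₁∂₁φ = ∂₁∂₀∂₁φ`, so `h0` and `h1` share their third-derivative term
  rw [pdV_pdV_comm hφp.pdV (i := 0) (j := 1)] at h0
  rw [pd_sum_christoffel_mul (contDiffAt_indMetric hφp) hdet] at h0 h1
  simp only [pd_eq_sum_christoffel_mul indMetric_isSymm (isUnit_iff_ne_zero.2 hdet),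
    pdV_pdV_dotProduct_pdV_pdV hφp hli] at h0 h1
  have hΓ : ∀ k, christoffel (indMetric φ) k 1 0 = christoffel (indMetric φ) k 0 1 :=
    fun k => christoffel_comm indMetric_isSymm k 1 0
  have hg : indMetric φ p 1 0 = indMetric φ p 0 1 := (indMetric_isSymm p).apply 0 1
  rw [R1212, det_fin_two]
  simp only [hΓ, hg, Fin.sum_univ_two] at h0 h1 ⊢
  linear_combination h0 - h1

/-- **Gauss equation.** For a smooth immersion `φ : U → ℝ³` with induced metric `g` and
second fundamental form `h`, one has `det(g⁻¹ h) = K`, where `K` is the Gauss curvature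
computed intrinsically from `g`. -/
theorem gauss_equation
    (U : Set Pt) (hU : IsOpen U)
    (φ : Pt → Vec3) (hφ : IsImmersionOn φ U) :
    ∀ p ∈ U, ((indMetric φ p)⁻¹ * sff φ p).det = gaussK (indMetric φ) p := by
  intro p hp
  rw [det_mul, det_nonsing_inv, Ring.inverse_eq_inv', ← R1212_indMetric_eq_det_sff hU hφ hp]
  exact (div_eq_inv_mul _ _).symm
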